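/- arXiv:2005.12190 — 2 statements merged into one kernel-verified Lean document; each statement's English description precedes it below -/
import Mathlib

section
/- Let E be a real inner product space, q > 0, g > 0, and δ₁, δ₂ real numbers. Suppose u⁰, u¹, u² ∈ E satisfy ‖u^i‖² = 2g·q^i for i = 0,1,2, ⟪u⁰, u¹⟫ = δ₁, ⟪u¹, u²⟫ = q·δ₁, and ⟪u⁰, u²⟫ = δ₂. Then −δ₂ ≤ 2gq − δ₁²/g. -/
open RealInnerProductSpace

theorem relative_gram_bound
    {E : Type*} [NormedAddCommGroup E] [InnerProductSpace ℝ E]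
    (q g δ1 δ2 : ℝ) (hq : 0 < q) (hg : 0 < g)
    (u0 u1 u2 : E)
    (h0 : ‖u0‖ ^ 2 = 2 * g) (h1 : ‖u1‖ ^ 2 = 2 * g * q)
    (h2 : ‖u2‖ ^ 2 = 2 * g * q ^ 2)
    (h01 : ⟪u0, u1⟫ = δ1) (h12 : ⟪u1, u2⟫ = q * δ1) (h02 : ⟪u0, u2⟫ = δ2) :
    -δ2 ≤ 2 * g * q - δ1 ^ 2 / g := by
  have key := real_inner_mul_inner_self_le (q • u0 + u2) u1
  have e0 : ⟪u0, u0⟫ = 2 * g := by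
    rw [real_inner_self_eq_norm_sq, h0]
  have e2 : ⟪u2, u2⟫ = 2 * g * q ^ 2 := by
    rw [real_inner_self_eq_norm_sq, h2]
  have e1 : ⟪u1, u1⟫ = 2 * g * q := by
    rw [real_inner_self_eq_norm_sq, h1]
  have h10 : ⟪u1, u0⟫ = δ1 := by rw [real_inner_comm, h01]
  have h21 : ⟪u2, u1⟫ = q * δ1 := by rw [real_inner_comm, h12]
  have h20 : ⟪u2, u0⟫ = δ2 := by rw [real_inner_comm, h02]
  simp only [inner_add_left, inner_add_right, inner_smul_left, inner_smul_right,
    RCLike.ofReal_real_eq_id, id, e0, e1, e2, h01, h10, h12, h21, h02, h20,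
    conj_trivial] at key
  have h : δ1 ^ 2 / g ≤ 2 * g * q + δ2 := by
    rw [div_le_iff₀ hg]
    nlinarith [key, mul_pos hq hq, sq_nonneg q]
  linarith
end

section
/- Let q > 0 and g_X ≥ g_Y ≥ 0 with g_X > g_Y, and let N₁, N₂, M₁, M₂ be real numbers, where M_j − N_j = #Y(F_{q^j}) − #X(F_{q^j}), and set δ_j = N_j − M_j for j = 1,2. Suppose there exist vectors u⁰, u¹, u² in a real inner product space with ‖u^i‖² = 2(g_X − g_Y)q^i for i = 0,1,2 and ⟪u^i, u^{i+j}⟫ = q^i(M_j − N_j) = −q^i δ_j for j = 1,2. Then δ₂ ≤ 2(g_X − g_Y)q − δ₁²/(g_X − g_Y). -/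
open RealInnerProductSpace

theorem relative_second_order_bound
    {E : Type*} [NormedAddCommGroup E] [InnerProductSpace ℝ E]
    (q gX gY δ1 δ2 : ℝ) (hq : 0 < q) (hgY : 0 ≤ gY) (hg : gY < gX)
    (u0 u1 u2 : E)
    (h0 : ‖u0‖ ^ 2 = 2 * (gX - gY))
    (h1 : ‖u1‖ ^ 2 = 2 * (gX - gY) * q)
    (h2 : ‖u2‖ ^ 2 = 2 * (gX - gY) * q ^ 2)
    (h01 : ⟪u0, u1⟫ = -δ1) (h12 : ⟪u1, u2⟫ = q * (-δ1)) (h02 : ⟪u0, u2⟫ = -δ2) :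
    δ2 ≤ 2 * (gX - gY) * q - δ1 ^ 2 / (gX - gY) := by
  have hg' : 0 < gX - gY := sub_pos.mpr hg
  have hcs := abs_real_inner_le_norm (q • u0 + u2) u1
  have key : ⟪q • u0 + u2, u1⟫ ^ 2 ≤ ‖q • u0 + u2‖ ^ 2 * ‖u1‖ ^ 2 := by
    have := sq_abs ⟪q • u0 + u2, u1⟫
    nlinarith [norm_nonneg (q • u0 + u2), norm_nonneg u1, abs_nonneg ⟪q • u0 + u2, u1⟫]
  have hv : ‖q • u0 + u2‖ ^ 2 = q ^ 2 * (2 * (gX - gY)) + 2 * (q * (-δ2)) + 2 * (gX - gY) * q ^ 2 := by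
    rw [@norm_add_sq_real, norm_smul, real_inner_smul_left, h02]
    rw [mul_pow, h0, h2]
    simp [abs_of_pos hq]
  have hw : ⟪q • u0 + u2, u1⟫ = q * (-δ1) + q * (-δ1) := by
    rw [inner_add_left, real_inner_smul_left, h01, real_inner_comm u1 u2, h12]
  rw [hv, hw, h1] at key
  have hdiv : δ1 ^ 2 / (gX - gY) * (gX - gY) = δ1 ^ 2 := div_mul_cancel₀ _ (ne_of_gt hg')
  have h3 : (gX - gY) * δ2 ≤ 2 * (gX - gY) ^ 2 * q - δ1 ^ 2 := by
    nlinarith [key, mul_pos hq hq, sq_nonneg q]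
  nlinarith [h3, hdiv, hg']
end
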